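/- Let Θ be a completely positive map from matrices over 𝒳 to matrices over 𝒴 (its Choi matrix 𝔠(Θ) is PSD) such that R := Θ†(I_𝒴) is positive definite, where Θ† is the Hilbert–Schmidt adjoint. Then: (i) there exists a unique pair (R', Φ) with R' positive definite and Φ a quantum channel (CP and trace-preserving) such that Θ(X) = Φ(R'^{1/2} X R'^{1/2}) for all X, and moreover R' = R; and (ii) the Choi matrix of this channel component Φ is the unique Bures projection of 𝔠(Θ) onto the set {M PSD on 𝒳⊗𝒴 : Tr_𝒴[M] = I_𝒳} of Choi matrices of quantum channels, given explicitly by 𝔠(Φ) = (A ⊗ I_𝒴) 𝔠(Θ) (A ⊗ I_𝒴) with A = ([𝔠(Θ)]_𝒳)^{-1/2}, where [𝔠(Θ)]_𝒳 := Tr_𝒴[𝔠(Θ)]. -/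

import Mathlib

open Matrix Kronecker
open scoped ComplexOrder

noncomputable section

open Classical in
/-- The positive semidefinite square root of a PSD matrix (junk value `0` otherwise). -/
noncomputable def msqrt {n : Type*} [Fintype n] [DecidableEq n] (A : Matrix n n ℂ) :
    Matrix n n ℂ :=
  if h : A.PosSemidef then
    h.1.eigenvectorUnitary.1 * diagonal ((↑) ∘ (√·) ∘ h.1.eigenvalues) *
      (star h.1.eigenvectorUnitary : Matrix n n ℂ) else 0

/-- The (square-root) fidelity `F(P,Q) = Tr[√(√Q P √Q)]`. -/
noncomputable def fidelity {n : Type*} [Fintype n] [DecidableEq n]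
    (P Q : Matrix n n ℂ) : ℝ :=
  ((msqrt (msqrt Q * P * msqrt Q)).trace).re

/-- The matrix geometric mean `A # B = A^{1/2} √(A^{-1/2} B A^{-1/2}) A^{1/2}`. -/
noncomputable def geomMean {n : Type*} [Fintype n] [DecidableEq n]
    (A B : Matrix n n ℂ) : Matrix n n ℂ :=
  msqrt A * msqrt ((msqrt A)⁻¹ * B * (msqrt A)⁻¹) * msqrt A

/-- The Choi matrix of a map `Φ` from matrices over `𝒳` to matrices over `𝒴`:
`𝔠(Φ) = ∑ i j, |i⟩⟨j| ⊗ Φ(|i⟩⟨j|)`. -/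
noncomputable def choi {X Y : Type*} [DecidableEq X]
    (Φ : Matrix X X ℂ → Matrix Y Y ℂ) : Matrix (X × Y) (X × Y) ℂ :=
  Matrix.of fun p q => Φ (Matrix.single p.1 q.1 1) p.2 q.2

/-- Partial trace over the output (second) factor `𝒴`. -/
noncomputable def ptraceY {X Y : Type*} [Fintype Y]
    (M : Matrix (X × Y) (X × Y) ℂ) : Matrix X X ℂ :=
  Matrix.of fun x x' => ∑ y : Y, M (x, y) (x', y)

/-!
The trace functional of `Θ` is `M ↦ Tr (R M)`, so `Φ := Θ (R^{-1/2} · R^{-1/2})` is trace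
preserving, and it is the only channel factorization because the trace functional determines
`R`. Since `Tr_𝒴 𝔠(Θ) = Rᵀ`, the Choi matrix of `Φ` is `G 𝔠(Θ) G` with `G = A ⊗ I` and
`A = (Tr_𝒴 𝔠(Θ))^{-1/2}`.

For the Bures projection, the polar decomposition of `√C √N = (√G √C)ᴴ (√G⁻¹ √N)` and
`2 Re Tr (Xᴴ Y) ≤ Tr (Xᴴ X) + Tr (Yᴴ Y)` give `2 F(C, N) ≤ Tr (G C) + Tr (G⁻¹ N)` for every
positive definite `G`, with equality only if `N = G C G`. For `C = 𝔠(Θ)` and `Tr_𝒴 N = I` both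
traces equal `Tr A⁻¹`, and `F(C, G C G) = Tr (G C)` attains the bound.
-/

section MatrixSqrt

open scoped MatrixOrder

variable {n : Type*} [Fintype n] [DecidableEq n] {A B : Matrix n n ℂ}

theorem msqrt_eq_cfcSqrt (hA : A.PosSemidef) : msqrt A = CFC.sqrt A := by
  rw [msqrt, dif_pos hA, CFC.sqrt_eq_cfc, cfc_nnreal_eq_real _ A, hA.isHermitian.cfc_eq,
    IsHermitian.cfc, Unitary.conjStarAlgAut_apply]
  congr
  funext x
  rw [Real.sqrt]

theorem posSemidef_msqrt (hA : A.PosSemidef) : (msqrt A).PosSemidef := by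
  rw [msqrt_eq_cfcSqrt hA]
  exact (CFC.sqrt_nonneg A).posSemidef

theorem msqrt_mul_msqrt (hA : A.PosSemidef) : msqrt A * msqrt A = A := by
  rw [msqrt_eq_cfcSqrt hA]
  exact CFC.sqrt_mul_sqrt_self A hA.nonneg

theorem msqrt_eq_of_mul_self_eq (hA : A.PosSemidef) (hB : B.PosSemidef) (h : B * B = A) :
    msqrt A = B := by
  rw [msqrt_eq_cfcSqrt hA]
  exact (CFC.sqrt_eq_iff A B hA.nonneg hB.nonneg).mpr h

theorem posDef_msqrt (hA : A.PosDef) : (msqrt A).PosDef := by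
  refine (posSemidef_msqrt hA.posSemidef).posDef_iff_isUnit.mpr
    (isUnit_of_mul_isUnit_left (y := msqrt A) ?_)
  rw [msqrt_mul_msqrt hA.posSemidef]
  exact hA.isUnit

theorem msqrt_transpose (hA : A.PosSemidef) : msqrt Aᵀ = (msqrt A)ᵀ :=
  msqrt_eq_of_mul_self_eq hA.transpose (posSemidef_msqrt hA).transpose
    (by rw [← transpose_mul, msqrt_mul_msqrt hA])

theorem msqrt_inv (hA : A.PosSemidef) : msqrt A⁻¹ = (msqrt A)⁻¹ := by
  rw [msqrt_eq_cfcSqrt hA, msqrt_eq_cfcSqrt hA.inv, hA.inv_sqrt]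

end MatrixSqrt

section HilbertSchmidt

variable {m n : Type*} [Fintype m] [Fintype n]

theorem re_trace_conjTranspose_mul_sub_self (X Y : Matrix m n ℂ) :
    ((X - Y)ᴴ * (X - Y)).trace.re
      = (Xᴴ * X).trace.re + (Yᴴ * Y).trace.re - 2 * (Xᴴ * Y).trace.re := by
  have hYX : (Yᴴ * X).trace = star (Xᴴ * Y).trace := by
    rw [← trace_conjTranspose, conjTranspose_mul, conjTranspose_conjTranspose]
  have hexpand : (X - Y)ᴴ * (X - Y) = Xᴴ * X - Xᴴ * Y - Yᴴ * X + Yᴴ * Y := by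
    rw [conjTranspose_sub, Matrix.sub_mul, Matrix.mul_sub, Matrix.mul_sub]; abel
  simp only [hexpand, trace_add, trace_sub, Complex.add_re, Complex.sub_re, hYX,
    Complex.star_def, Complex.conj_re]
  ring

theorem two_mul_re_trace_conjTranspose_mul_le (X Y : Matrix m n ℂ) :
    2 * (Xᴴ * Y).trace.re ≤ (Xᴴ * X).trace.re + (Yᴴ * Y).trace.re := by
  have := (Complex.nonneg_iff.mp (posSemidef_conjTranspose_mul_self (X - Y)).trace_nonneg).1
  rw [re_trace_conjTranspose_mul_sub_self] at this
  linarith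

theorem eq_of_two_mul_re_trace_conjTranspose_mul_eq {X Y : Matrix m n ℂ}
    (h : 2 * (Xᴴ * Y).trace.re = (Xᴴ * X).trace.re + (Yᴴ * Y).trace.re) : X = Y := by
  have him := (Complex.nonneg_iff.mp (posSemidef_conjTranspose_mul_self (X - Y)).trace_nonneg).2
  have hre := re_trace_conjTranspose_mul_sub_self X Y
  rw [← sub_eq_zero, ← trace_conjTranspose_mul_self_eq_zero_iff]
  exact Complex.ext (by simp only [Complex.zero_re]; linarith) him.symm

end HilbertSchmidt

theorem LinearMap.exists_linearIsometry_comp_eq_of_norm_eq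
    {𝕜 E : Type*} [RCLike 𝕜] [NormedAddCommGroup E] [InnerProductSpace 𝕜 E]
    [FiniteDimensional 𝕜 E] {f g : E →ₗ[𝕜] E} (h : ∀ x, ‖f x‖ = ‖g x‖) :
    ∃ u : E →ₗᵢ[𝕜] E, ∀ x, u (g x) = f x := by
  have hker : LinearMap.ker g ≤ LinearMap.ker f := fun x hx => by
    rw [LinearMap.mem_ker, ← norm_eq_zero, h, norm_eq_zero]
    exact hx
  let L : LinearMap.range g →ₗ[𝕜] E :=
    ((LinearMap.ker g).liftQ f hker).comp g.quotKerEquivRange.symm.toLinearMap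
  have hL (x : E) : L ⟨g x, LinearMap.mem_range_self g x⟩ = f x := by
    simp only [L, LinearMap.comp_apply, LinearEquiv.coe_toLinearMap,
      g.quotKerEquivRange_symm_apply_image x (LinearMap.mem_range_self g x),
      Submodule.mkQ_apply, Submodule.liftQ_apply]
  have hLnorm : ∀ s, ‖L s‖ = ‖s‖ := by
    rintro ⟨_, x, rfl⟩
    exact (congrArg norm (hL x)).trans (h x)
  exact ⟨LinearIsometry.extend ⟨L, hLnorm⟩, fun x =>
    (LinearIsometry.extend_apply _ ⟨g x, LinearMap.mem_range_self g x⟩).trans (hL x)⟩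

theorem Matrix.exists_mem_unitary_mul_eq_of_conjTranspose_mul_self_eq
    {𝕜 n : Type*} [RCLike 𝕜] [Fintype n] [DecidableEq n] {A B : Matrix n n 𝕜}
    (h : Aᴴ * A = Bᴴ * B) : ∃ U ∈ unitary (Matrix n n 𝕜), U * B = A := by
  let T := toEuclideanCLM (n := n) (𝕜 := 𝕜)
  have hadj (M : Matrix n n 𝕜) :
      ContinuousLinearMap.adjoint (T M) ∘L T M = T (Mᴴ * M) := by
    rw [map_mul, ← star_eq_conjTranspose, map_star, ContinuousLinearMap.star_eq_adjoint]
    rfl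
  have hnorm (x : EuclideanSpace 𝕜 n) : ‖T A x‖ = ‖T B x‖ := by
    rw [← sq_eq_sq₀ (norm_nonneg _) (norm_nonneg _),
      ContinuousLinearMap.apply_norm_sq_eq_inner_adjoint_left,
      ContinuousLinearMap.apply_norm_sq_eq_inner_adjoint_left, hadj, hadj, h]
  obtain ⟨u, hu⟩ := LinearMap.exists_linearIsometry_comp_eq_of_norm_eq
    (f := (T A : EuclideanSpace 𝕜 n →ₗ[𝕜] EuclideanSpace 𝕜 n)) (g := T B) hnorm
  set v := u.toContinuousLinearMap
  refine ⟨T.symm v, mem_unitaryGroup_iff'.mpr ?_, ?_⟩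
  · apply EquivLike.injective T
    rw [star_eq_conjTranspose, ← hadj, T.apply_symm_apply, map_one]
    exact (ContinuousLinearMap.isometry_iff_adjoint_comp_self v).mp u.isometry
  · rw [← T.symm_apply_apply B, ← T.symm_apply_apply A, ← map_mul]
    congr 1
    ext1 x
    exact hu x

section TraceNorm

variable {n : Type*} [Fintype n] [DecidableEq n]

theorem exists_mem_unitary_msqrt_conjTranspose_mul_self_eq (M : Matrix n n ℂ) :
    ∃ U ∈ unitary (Matrix n n ℂ), msqrt (Mᴴ * M) = star U * M := by
  have hT := posSemidef_msqrt (posSemidef_conjTranspose_mul_self M)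
  obtain ⟨U, hU, hUM⟩ := exists_mem_unitary_mul_eq_of_conjTranspose_mul_self_eq
    (A := M) (B := msqrt (Mᴴ * M))
    (by rw [hT.isHermitian.eq, msqrt_mul_msqrt (posSemidef_conjTranspose_mul_self M)])
  refine ⟨U, hU, ?_⟩
  conv_rhs => rw [← hUM, ← mul_assoc, Unitary.star_mul_self_of_mem hU, one_mul]

theorem trace_conjTranspose_mul_self_mul_mem_unitary (A : Matrix n n ℂ) {U : Matrix n n ℂ}
    (hU : U ∈ unitary (Matrix n n ℂ)) : ((A * U)ᴴ * (A * U)).trace = (Aᴴ * A).trace := by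
  have hUU : U * Uᴴ = 1 := Unitary.mul_star_self_of_mem hU
  rw [conjTranspose_mul, mul_assoc, trace_mul_comm, mul_assoc, mul_assoc, hUU, mul_one]

/-- `Tr √(Mᴴ M) = ‖M‖₁`, so this is `2 ‖Aᴴ B‖₁ ≤ ‖A‖₂² + ‖B‖₂²`. -/
theorem two_mul_re_trace_msqrt_le (A B : Matrix n n ℂ) :
    2 * (msqrt ((Aᴴ * B)ᴴ * (Aᴴ * B))).trace.re ≤
      (Aᴴ * A).trace.re + (Bᴴ * B).trace.re := by
  obtain ⟨U, hU, hAB⟩ := exists_mem_unitary_msqrt_conjTranspose_mul_self_eq (Aᴴ * B)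
  have h := two_mul_re_trace_conjTranspose_mul_le (A * U) B
  rwa [trace_conjTranspose_mul_self_mul_mem_unitary A hU, conjTranspose_mul,
    ← star_eq_conjTranspose U, mul_assoc, ← hAB] at h

theorem mul_conjTranspose_self_eq_of_two_mul_re_trace_msqrt_eq {A B : Matrix n n ℂ}
    (h : 2 * (msqrt ((Aᴴ * B)ᴴ * (Aᴴ * B))).trace.re =
      (Aᴴ * A).trace.re + (Bᴴ * B).trace.re) :
    B * Bᴴ = A * Aᴴ := by
  obtain ⟨U, hU, hAB⟩ := exists_mem_unitary_msqrt_conjTranspose_mul_self_eq (Aᴴ * B)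
  rw [hAB, ← trace_conjTranspose_mul_self_mul_mem_unitary A hU, ← mul_assoc,
    star_eq_conjTranspose, ← conjTranspose_mul] at h
  rw [← eq_of_two_mul_re_trace_conjTranspose_mul_eq h, conjTranspose_mul, mul_assoc,
    ← mul_assoc U, ← star_eq_conjTranspose U, Unitary.mul_star_self_of_mem hU, one_mul]

end TraceNorm

section Fidelity

variable {n : Type*} [Fintype n] [DecidableEq n] {C G N : Matrix n n ℂ}

theorem trace_conjTranspose_mul_self_msqrt_mul_msqrt (hG : G.PosSemidef) (hC : C.PosSemidef) :
    ((msqrt G * msqrt C)ᴴ * (msqrt G * msqrt C)).trace = (G * C).trace := by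
  rw [conjTranspose_mul, (posSemidef_msqrt hC).isHermitian.eq,
    (posSemidef_msqrt hG).isHermitian.eq, mul_assoc, ← mul_assoc (msqrt G),
    msqrt_mul_msqrt hG, trace_mul_comm, mul_assoc, msqrt_mul_msqrt hC]

/-- Splitting `√C √N = (√G √C)ᴴ (√G⁻¹ √N)` is what brings `G` into the fidelity. -/
theorem fidelity_eq_re_trace_msqrt (hC : C.PosSemidef) (hN : N.PosSemidef) (hG : G.PosDef) :
    fidelity C N = (msqrt (((msqrt G * msqrt C)ᴴ * (msqrt G⁻¹ * msqrt N))ᴴ *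
      ((msqrt G * msqrt C)ᴴ * (msqrt G⁻¹ * msqrt N)))).trace.re := by
  have hSG : (msqrt G).PosDef := posDef_msqrt hG
  have hsplit : (msqrt G * msqrt C)ᴴ * (msqrt G⁻¹ * msqrt N) = msqrt C * msqrt N := by
    rw [msqrt_inv hG.posSemidef, conjTranspose_mul, hSG.isHermitian.eq,
      (posSemidef_msqrt hC).isHermitian.eq, mul_assoc,
      mul_nonsing_inv_cancel_left _ _ ((isUnit_iff_isUnit_det _).mp hSG.isUnit)]
  rw [hsplit, conjTranspose_mul, (posSemidef_msqrt hC).isHermitian.eq,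
    (posSemidef_msqrt hN).isHermitian.eq, mul_assoc, ← mul_assoc (msqrt C),
    msqrt_mul_msqrt hC, ← mul_assoc, fidelity]

theorem two_mul_fidelity_le (hC : C.PosSemidef) (hN : N.PosSemidef) (hG : G.PosDef) :
    2 * fidelity C N ≤ (G * C).trace.re + (G⁻¹ * N).trace.re := by
  have h := two_mul_re_trace_msqrt_le (msqrt G * msqrt C) (msqrt G⁻¹ * msqrt N)
  rwa [← fidelity_eq_re_trace_msqrt hC hN hG, trace_conjTranspose_mul_self_msqrt_mul_msqrt
    hG.posSemidef hC, trace_conjTranspose_mul_self_msqrt_mul_msqrt hG.inv.posSemidef hN] at h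

theorem eq_mul_mul_of_two_mul_fidelity_eq (hC : C.PosSemidef) (hN : N.PosSemidef)
    (hG : G.PosDef) (h : 2 * fidelity C N = (G * C).trace.re + (G⁻¹ * N).trace.re) :
    N = G * C * G := by
  rw [fidelity_eq_re_trace_msqrt hC hN hG, ← trace_conjTranspose_mul_self_msqrt_mul_msqrt
    hG.posSemidef hC, ← trace_conjTranspose_mul_self_msqrt_mul_msqrt hG.inv.posSemidef hN] at h
  have hBA := mul_conjTranspose_self_eq_of_two_mul_re_trace_msqrt_eq h
  have hSG : (msqrt G).PosDef := posDef_msqrt hG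
  have hdet : IsUnit (msqrt G).det := (isUnit_iff_isUnit_det _).mp hSG.isUnit
  rw [msqrt_inv hG.posSemidef, conjTranspose_mul, conjTranspose_mul,
    (posSemidef_msqrt hN).isHermitian.eq, (posSemidef_msqrt hC).isHermitian.eq,
    hSG.isHermitian.eq, conjTranspose_nonsing_inv, hSG.isHermitian.eq] at hBA
  calc N = msqrt G * ((msqrt G)⁻¹ * msqrt N * (msqrt N * (msqrt G)⁻¹)) * msqrt G := by
        simp only [mul_assoc]
        rw [nonsing_inv_mul _ hdet, mul_one, mul_nonsing_inv_cancel_left _ _ hdet,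
          msqrt_mul_msqrt hN]
    _ = msqrt G * msqrt G * (msqrt C * msqrt C) * (msqrt G * msqrt G) := by
        rw [hBA]
        simp only [mul_assoc]
    _ = G * C * G := by rw [msqrt_mul_msqrt hG.posSemidef, msqrt_mul_msqrt hC]

theorem fidelity_mul_mul_same (hC : C.PosSemidef) (hG : G.PosDef) :
    fidelity C (G * C * G) = (G * C).trace.re := by
  have hGCG : (G * C * G).PosSemidef := by
    simpa only [hG.isHermitian.eq] using hC.mul_mul_conjTranspose_same G
  set D := msqrt (G * C * G)
  have hD : D.PosSemidef := posSemidef_msqrt hGCG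
  have hDD : D * D = G * C * G := msqrt_mul_msqrt hGCG
  have hdet : IsUnit G.det := (isUnit_iff_isUnit_det _).mp hG.isUnit
  have hsq : D * G⁻¹ * D * (D * G⁻¹ * D) = D * C * D := by
    calc D * G⁻¹ * D * (D * G⁻¹ * D) = D * (G⁻¹ * (G * C * G) * G⁻¹) * D := by
          rw [← hDD]; simp only [mul_assoc]
      _ = D * C * D := by
          rw [mul_assoc G, nonsing_inv_mul_cancel_left _ _ hdet,
            mul_nonsing_inv_cancel_right _ _ hdet]
  have hroot : msqrt (D * C * D) = D * G⁻¹ * D := by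
    refine msqrt_eq_of_mul_self_eq ?_ ?_ hsq
    · simpa only [hD.isHermitian.eq] using hC.mul_mul_conjTranspose_same D
    · simpa only [hD.isHermitian.eq] using hG.inv.posSemidef.mul_mul_conjTranspose_same D
  calc fidelity C (G * C * G) = (G⁻¹ * (D * D)).trace.re := by
        rw [fidelity, hroot, mul_assoc, trace_mul_comm, mul_assoc]
    _ = (G * C).trace.re := by
        rw [hDD, mul_assoc G, nonsing_inv_mul_cancel_left _ _ hdet, trace_mul_comm]

theorem fidelity_le_fidelity_mul_mul_same (hC : C.PosSemidef) (hN : N.PosSemidef)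
    (hG : G.PosDef) (htr : (G⁻¹ * N).trace.re = (G * C).trace.re) :
    fidelity C N ≤ fidelity C (G * C * G) := by
  have := two_mul_fidelity_le hC hN hG
  rw [fidelity_mul_mul_same hC hG]
  linarith

theorem eq_mul_mul_same_of_fidelity_eq (hC : C.PosSemidef) (hN : N.PosSemidef)
    (hG : G.PosDef) (htr : (G⁻¹ * N).trace.re = (G * C).trace.re)
    (h : fidelity C N = fidelity C (G * C * G)) : N = G * C * G := by
  refine eq_mul_mul_of_two_mul_fidelity_eq hC hN hG ?_
  rw [h, fidelity_mul_mul_same hC hG, htr]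
  ring

end Fidelity

section Choi

variable {X Y : Type*} [Fintype X]

theorem apply_apply_eq_sum_choi [DecidableEq X] (Θ : Matrix X X ℂ →ₗ[ℂ] Matrix Y Y ℂ)
    (M : Matrix X X ℂ) (y y' : Y) :
    Θ M y y' = ∑ a, ∑ b, M a b * choi (fun M => Θ M) (a, y) (b, y') := by
  conv_lhs => rw [matrix_eq_sum_single M]
  simp only [map_sum, Matrix.sum_apply]
  refine Finset.sum_congr rfl fun a _ => Finset.sum_congr rfl fun b _ => ?_
  rw [show single a b (M a b) = M a b • single a b 1 by rw [smul_single, smul_eq_mul, mul_one],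
    map_smul, Matrix.smul_apply, smul_eq_mul]
  rfl

theorem choi_comp_mulLeftRight [DecidableEq X] [Fintype Y] [DecidableEq Y]
    (Θ : Matrix X X ℂ →ₗ[ℂ] Matrix Y Y ℂ) (A B : Matrix X X ℂ) :
    (choi fun M => (Θ ∘ₗ LinearMap.mulLeftRight ℂ (A, B)) M) =
      (Aᵀ ⊗ₖ (1 : Matrix Y Y ℂ)) * choi (fun M => Θ M) *
        (Bᵀ ⊗ₖ (1 : Matrix Y Y ℂ)) := by
  ext ⟨i, y⟩ ⟨j, y'⟩
  rw [choi, of_apply, LinearMap.comp_apply, LinearMap.mulLeftRight_apply,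
    apply_apply_eq_sum_choi]
  simp only [mul_apply, kroneckerMap_apply, one_apply, transpose_apply, Fintype.sum_prod_type,
    single_apply, ite_and, mul_ite, ite_mul, mul_one, mul_zero, zero_mul, Finset.sum_ite_eq,
    Finset.sum_ite_eq', Finset.sum_mul, Finset.mem_univ, if_true]
  rw [Finset.sum_comm]
  exact Finset.sum_congr rfl fun b _ => Finset.sum_congr rfl fun a _ => by ring

theorem ptraceY_choi_eq_transpose [DecidableEq X] [Fintype Y]
    {Φ : Matrix X X ℂ → Matrix Y Y ℂ} {R : Matrix X X ℂ}
    (h : ∀ M, (Φ M).trace = (R * M).trace) : ptraceY (choi Φ) = Rᵀ := by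
  ext x x'
  calc ptraceY (choi Φ) x x' = (Φ (single x x' 1)).trace := rfl
    _ = R x' x := by simp [h, trace_mul_single]

theorem trace_kronecker_one_mul [Fintype Y] [DecidableEq Y] (K : Matrix X X ℂ)
    (N : Matrix (X × Y) (X × Y) ℂ) :
    ((K ⊗ₖ (1 : Matrix Y Y ℂ)) * N).trace = (K * ptraceY N).trace := by
  simp only [trace, diag_apply, mul_apply, kroneckerMap_apply, one_apply, Fintype.sum_prod_type,
    ptraceY, of_apply, mul_ite, mul_one, mul_zero, Finset.sum_ite_eq, Finset.mem_univ, if_true,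
    Finset.mul_sum, ite_mul, zero_mul]
  exact Finset.sum_congr rfl fun x _ => Finset.sum_comm

end Choi

section ChannelProjection

variable {X Y : Type*} [Fintype X] [DecidableEq X] [Fintype Y] [DecidableEq Y]
  {C N : Matrix (X × Y) (X × Y) ℂ}

def normalizeMarginal (C : Matrix (X × Y) (X × Y) ℂ) : Matrix (X × Y) (X × Y) ℂ :=
  ((msqrt (ptraceY C))⁻¹ ⊗ₖ (1 : Matrix Y Y ℂ)) * C *
    ((msqrt (ptraceY C))⁻¹ ⊗ₖ (1 : Matrix Y Y ℂ))

theorem posDef_inv_msqrt_kronecker_one {P : Matrix X X ℂ} (hP : P.PosDef) :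
    ((msqrt P)⁻¹ ⊗ₖ (1 : Matrix Y Y ℂ)).PosDef :=
  (posDef_msqrt hP).inv.kronecker PosDef.one

theorem posSemidef_normalizeMarginal (hC : C.PosSemidef) (hCX : (ptraceY C).PosDef) :
    (normalizeMarginal C).PosSemidef := by
  rw [normalizeMarginal]
  simpa only [(posDef_inv_msqrt_kronecker_one (Y := Y) hCX).isHermitian.eq] using
    hC.mul_mul_conjTranspose_same ((msqrt (ptraceY C))⁻¹ ⊗ₖ (1 : Matrix Y Y ℂ))

theorem trace_inv_kronecker_one_mul_eq_of_ptraceY_eq_one (hCX : (ptraceY C).PosDef)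
    (hN : ptraceY N = 1) :
    (((msqrt (ptraceY C))⁻¹ ⊗ₖ (1 : Matrix Y Y ℂ))⁻¹ * N).trace =
      (((msqrt (ptraceY C))⁻¹ ⊗ₖ (1 : Matrix Y Y ℂ)) * C).trace := by
  have hSS := msqrt_mul_msqrt hCX.posSemidef
  set S := msqrt (ptraceY C)
  have hdet : IsUnit S.det := (isUnit_iff_isUnit_det _).mp (posDef_msqrt hCX).isUnit
  rw [inv_kronecker, inv_one, nonsing_inv_nonsing_inv _ hdet, trace_kronecker_one_mul,
    trace_kronecker_one_mul, hN, mul_one, ← hSS, nonsing_inv_mul_cancel_left _ _ hdet]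

theorem fidelity_le_fidelity_normalizeMarginal (hC : C.PosSemidef) (hCX : (ptraceY C).PosDef)
    (hN : N.PosSemidef) (hNX : ptraceY N = 1) :
    fidelity C N ≤ fidelity C (normalizeMarginal C) :=
  fidelity_le_fidelity_mul_mul_same hC hN (posDef_inv_msqrt_kronecker_one hCX)
    (congrArg Complex.re (trace_inv_kronecker_one_mul_eq_of_ptraceY_eq_one hCX hNX))

theorem eq_normalizeMarginal_of_fidelity_eq (hC : C.PosSemidef) (hCX : (ptraceY C).PosDef)
    (hN : N.PosSemidef) (hNX : ptraceY N = 1)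
    (h : fidelity C N = fidelity C (normalizeMarginal C)) : N = normalizeMarginal C :=
  eq_mul_mul_same_of_fidelity_eq hC hN (posDef_inv_msqrt_kronecker_one hCX)
    (congrArg Complex.re (trace_inv_kronecker_one_mul_eq_of_ptraceY_eq_one hCX hNX)) h

end ChannelProjection

section ChannelComponent

variable {X Y : Type*} [Fintype X] [DecidableEq X] {Θ : Matrix X X ℂ →ₗ[ℂ] Matrix Y Y ℂ}
  {R : Matrix X X ℂ}

/-- The channel `Φ` in the factorization `Θ(M) = Φ(R^{1/2} M R^{1/2})`. -/
def channelComponent (Θ : Matrix X X ℂ →ₗ[ℂ] Matrix Y Y ℂ) (R : Matrix X X ℂ) :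
    Matrix X X ℂ →ₗ[ℂ] Matrix Y Y ℂ :=
  Θ ∘ₗ LinearMap.mulLeftRight ℂ ((msqrt R)⁻¹, (msqrt R)⁻¹)

theorem channelComponent_apply_msqrt_mul_mul (hR : R.PosDef) (M : Matrix X X ℂ) :
    channelComponent Θ R (msqrt R * M * msqrt R) = Θ M := by
  have hdet : IsUnit (msqrt R).det := (isUnit_iff_isUnit_det _).mp (posDef_msqrt hR).isUnit
  rw [channelComponent, LinearMap.comp_apply, LinearMap.mulLeftRight_apply, ← mul_assoc,
    nonsing_inv_mul_cancel_left _ _ hdet, mul_nonsing_inv_cancel_right _ _ hdet]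

theorem trace_channelComponent_apply [Fintype Y] (hΘ : ∀ M, (Θ M).trace = (R * M).trace)
    (hR : R.PosDef) (M : Matrix X X ℂ) : (channelComponent Θ R M).trace = M.trace := by
  rw [channelComponent, LinearMap.comp_apply, LinearMap.mulLeftRight_apply, hΘ]
  have hSS := msqrt_mul_msqrt hR.posSemidef
  set S := msqrt R
  have hdet : IsUnit S.det := (isUnit_iff_isUnit_det _).mp (posDef_msqrt hR).isUnit
  rw [← hSS]
  simp only [mul_assoc]
  rw [mul_nonsing_inv_cancel_left _ _ hdet, trace_mul_comm, nonsing_inv_mul_cancel_right _ _ hdet]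

theorem choi_channelComponent [Fintype Y] [DecidableEq Y]
    (hΘ : ∀ M, (Θ M).trace = (R * M).trace) (hR : R.PosDef) :
    (choi fun M => channelComponent Θ R M) = normalizeMarginal (choi fun M => Θ M) := by
  rw [normalizeMarginal, ptraceY_choi_eq_transpose hΘ, msqrt_transpose hR.posSemidef,
    ← transpose_nonsing_inv]
  exact choi_comp_mulLeftRight Θ _ _

theorem ptraceY_choi_channelComponent [Fintype Y] (hΘ : ∀ M, (Θ M).trace = (R * M).trace)
    (hR : R.PosDef) : ptraceY (choi fun M => channelComponent Θ R M) = 1 := by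
  rw [ptraceY_choi_eq_transpose (R := 1) fun M => by
    rw [trace_channelComponent_apply hΘ hR, one_mul], transpose_one]

theorem eq_and_eq_channelComponent_of_apply_eq [Fintype Y]
    (hΘ : ∀ M, (Θ M).trace = (R * M).trace) (hR : R.PosDef) {R' : Matrix X X ℂ}
    (hR' : R'.PosSemidef) {Φ' : Matrix X X ℂ →ₗ[ℂ] Matrix Y Y ℂ}
    (hΦ' : ∀ M, (Φ' M).trace = M.trace) (hfac : ∀ M, Θ M = Φ' (msqrt R' * M * msqrt R')) :
    R' = R ∧ Φ' = channelComponent Θ R := by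
  have hR'R : R' = R := by
    refine ext_iff_trace_mul_right.mpr fun M => ?_
    rw [← hΘ, hfac, hΦ', trace_mul_comm (msqrt R' * M), ← mul_assoc, msqrt_mul_msqrt hR']
  subst hR'R
  refine ⟨rfl, LinearMap.ext fun M => ?_⟩
  have hdet : IsUnit (msqrt R').det := (isUnit_iff_isUnit_det _).mp (posDef_msqrt hR).isUnit
  calc Φ' M = Φ' (msqrt R' * ((msqrt R')⁻¹ * M * (msqrt R')⁻¹) * msqrt R') := by
        rw [← mul_assoc, mul_nonsing_inv_cancel_left _ _ hdet,
          nonsing_inv_mul_cancel_right _ _ hdet]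
    _ = channelComponent Θ R' M := (hfac _).symm

end ChannelComponent

/-- **Prior–channel decomposition.** Let `Θ` be a CP map with
Hilbert–Schmidt adjoint `Θadj` such that `R = Θadj 1` is positive definite. Then there
is a unique pair `(R', Φ)` of a positive definite prior and a quantum channel with
`Θ(X) = Φ(R'^{1/2} X R'^{1/2})`, necessarily `R' = R`; moreover the Choi matrix of the
channel component `Φ` equals `(A ⊗ I) 𝔠(Θ) (A ⊗ I)` with `A = (Tr_𝒴 𝔠(Θ))^{-1/2}` and
it is the unique Bures projection of `𝔠(Θ)` onto `{M PSD : Tr_𝒴 M = I}`. -/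
theorem prior_channel_decomposition
    {X Y : Type*} [Fintype X] [DecidableEq X] [Fintype Y] [DecidableEq Y]
    (Θ : Matrix X X ℂ →ₗ[ℂ] Matrix Y Y ℂ)
    (hCP : (choi fun M => Θ M).PosSemidef)
    (Θadj : Matrix Y Y ℂ → Matrix X X ℂ)
    (hadj : ∀ (A : Matrix X X ℂ) (B : Matrix Y Y ℂ),
      (Bᴴ * Θ A).trace = ((Θadj B)ᴴ * A).trace)
    (hR : (Θadj 1).PosDef) :
    ∃ Φ : Matrix X X ℂ →ₗ[ℂ] Matrix Y Y ℂ,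
      (choi fun M => Φ M).PosSemidef ∧ (∀ M, (Φ M).trace = M.trace) ∧
      (∀ M, Θ M = Φ (msqrt (Θadj 1) * M * msqrt (Θadj 1))) ∧
      (∀ (R' : Matrix X X ℂ) (Φ' : Matrix X X ℂ →ₗ[ℂ] Matrix Y Y ℂ),
        R'.PosDef → (choi fun M => Φ' M).PosSemidef → (∀ M, (Φ' M).trace = M.trace) →
        (∀ M, Θ M = Φ' (msqrt R' * M * msqrt R')) → R' = Θadj 1 ∧ Φ' = Φ) ∧
      (choi fun M => Φ M) =
        (((msqrt (ptraceY (choi fun M => Θ M)))⁻¹ ⊗ₖ (1 : Matrix Y Y ℂ)) *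
          (choi fun M => Θ M) *
          ((msqrt (ptraceY (choi fun M => Θ M)))⁻¹ ⊗ₖ (1 : Matrix Y Y ℂ))) ∧
      ptraceY (choi fun M => Φ M) = 1 ∧
      (∀ N : Matrix (X × Y) (X × Y) ℂ, N.PosSemidef → ptraceY N = 1 →
        fidelity (choi fun M => Θ M) N ≤
          fidelity (choi fun M => Θ M) (choi fun M => Φ M) ∧
        (fidelity (choi fun M => Θ M) N =
            fidelity (choi fun M => Θ M) (choi fun M => Φ M) →
          N = choi fun M => Φ M)) := by
  have hΘ (M : Matrix X X ℂ) : (Θ M).trace = (Θadj 1 * M).trace := by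
    simpa only [conjTranspose_one, one_mul, hR.isHermitian.eq] using hadj M 1
  have hCX : (ptraceY (choi fun M => Θ M)).PosDef := by
    rw [ptraceY_choi_eq_transpose hΘ]
    exact hR.transpose
  have hchoi := choi_channelComponent hΘ hR
  refine ⟨channelComponent Θ (Θadj 1), hchoi ▸ posSemidef_normalizeMarginal hCP hCX,
    trace_channelComponent_apply hΘ hR, fun M => (channelComponent_apply_msqrt_mul_mul hR M).symm,
    fun R' Φ' hR' _ hΦ' hfac =>
      eq_and_eq_channelComponent_of_apply_eq hΘ hR hR'.posSemidef hΦ' hfac,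
    hchoi, ptraceY_choi_channelComponent hΘ hR, fun N hN hNX => ?_⟩
  rw [hchoi]
  exact ⟨fidelity_le_fidelity_normalizeMarginal hCP hCX hN hNX,
    eq_normalizeMarginal_of_fidelity_eq hCP hCX hN hNX⟩
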